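/- Let G be a compact Hausdorff topological group, A a compact G-module, and fix n ≥ 1. Assume A has a presentation A = lim_r A_r as the inverse limit of an inverse system {A_r, φ_{rt}} over a directed poset R of compact G-modules with continuous G-equivariant transition homomorphisms, where each A_r is evenly continuous with respect to G^{n-1}, and let φ_r : A → A_r denote the natural projections. Then the map Θ_n : H^n_cts(G,A)_po → lim_r H^n_cts(G,A_r)_po given by [a] ↦ ([φ_r ∘ a])_r is a well-defined continuous bijection onto the inverse limit of the groups H^n_cts(G,A_r)_po. In particular, if A is evenly continuous with respect to G^n, then Θ_n is a homeomorphism. -/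

import Mathlib

/-- A set `F` of maps `B → A` is evenly continuous. -/
def EvenlyContinuousSet {B A : Type} [TopologicalSpace B] [TopologicalSpace A]
    (F : Set (B → A)) : Prop :=
  ∀ b : B, ∀ a : A, ∀ U ∈ nhds a, ∃ V ∈ nhds b, ∃ W ∈ nhds a,
    ∀ f ∈ F, f b ∈ W → ∀ v ∈ V, f v ∈ U

/-- The differential `d_{n+1} : M(G^n, A) → M(G^{n+1}, A)` of continuous group
cohomology (in the paper's indexing, `dmap ac n` is `d_{n+1}`). -/
def dmap {G A : Type} [Group G] [AddCommGroup A] (ac : G → A → A) (n : ℕ)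
    (f : (Fin n → G) → A) : (Fin (n + 1) → G) → A :=
  fun s =>
    ac (s 0) (f fun j => s j.succ)
      + (∑ i : Fin n, ((-1 : ℤ) ^ ((i : ℕ) + 1)) •
          f (fun j => if (j : ℕ) < (i : ℕ) then s j.castSucc
            else if (j : ℕ) = (i : ℕ) then s j.castSucc * s j.succ
            else s j.succ))
      + ((-1 : ℤ) ^ (n + 1)) • f (fun j => s j.castSucc)

section Setup

variable {G : Type} [Group G] [TopologicalSpace G]
variable {R : Type} [PartialOrder R]
variable {Ar : R → Type} [∀ r, AddCommGroup (Ar r)] [∀ r, TopologicalSpace (Ar r)]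

/-- The inverse limit `A = {(x_r) ∈ ∏ A_r | φ_{rt}(x_r) = x_t}`, with the subspace
topology of the product topology (its group operations and `G`-action are
coordinatewise). -/
abbrev InvLim (φ : ∀ ⦃r t : R⦄, t ≤ r → Ar r → Ar t) : Type :=
  {x : ∀ r, Ar r // ∀ (r t : R) (h : t ≤ r), φ h (x r) = x t}

/-- `Z^{m+1}_cts(G, lim A_r)_po`: continuous `(m+1)`-cocycles of `G` in the inverse
limit (the cocycle identity `d_{m+2} a = 0` being stated coordinatewise, since the
limit's addition and `G`-action are coordinatewise), with the point-open topology. -/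
abbrev ZLim (acr : ∀ r, G → Ar r → Ar r) (φ : ∀ ⦃r t : R⦄, t ≤ r → Ar r → Ar t)
    (m : ℕ) : Type :=
  {a : (Fin (m + 1) → G) → InvLim φ // Continuous a ∧
    ∀ (r : R) (s : Fin (m + 2) → G),
      dmap (acr r) (m + 1) (fun u => (a u).val r) s = 0}

/-- The coboundary relation on `Z^{m+1}_cts(G, lim A_r)_po` (stated coordinatewise). -/
def CohLim (acr : ∀ r, G → Ar r → Ar r) (φ : ∀ ⦃r t : R⦄, t ≤ r → Ar r → Ar t)
    (m : ℕ) (a b : ZLim acr φ m) : Prop :=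
  ∃ f : (Fin m → G) → InvLim φ, Continuous f ∧
    ∀ (s : Fin (m + 1) → G) (r : R),
      (b.val s).val r = (a.val s).val r + dmap (acr r) m (fun u => (f u).val r) s

/-- `Z^{m+1}_cts(G, A_r)_po` for an individual term of the system. -/
abbrev Zr (acr : ∀ r, G → Ar r → Ar r) (m : ℕ) (r : R) : Type :=
  {b : (Fin (m + 1) → G) → Ar r // Continuous b ∧
    ∀ s : Fin (m + 2) → G, dmap (acr r) (m + 1) b s = 0}

/-- The coboundary relation on `Z^{m+1}_cts(G, A_r)_po`. -/
def Cohr (acr : ∀ r, G → Ar r → Ar r) (m : ℕ) (r : R) (b b' : Zr acr m r) : Prop :=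
  ∃ f : (Fin m → G) → Ar r, Continuous f ∧
    ∀ s : Fin (m + 1) → G, b'.val s = b.val s + dmap (acr r) m f s

end Setup

/-!
The map `Θ_n` is induced by the projections `a ↦ φ_r ∘ a`; it is continuous because the
point-open topology is a product topology. Even continuity of `A_r` with respect to `G^{n-1}`
makes `C(G^{n-1}, A_r)` closed, hence compact, in the product `A_r^{G^{n-1}}`, so the group
`B^n(G, A_r)` of coboundaries is compact. Injectivity and surjectivity of `Θ_n` then both reduce
to the nonemptiness of an inverse limit of nonempty compact sets: the primitives of
`φ_r ∘ (b - a)`, resp. the cocycles representing the `r`-th component of a given compatible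
family of classes.

If `A` is evenly continuous with respect to `G^n`, then `Z^n_cts(G, A)_po` is compact, while
each `H^n_cts(G, A_r)_po` is Hausdorff: the quotient map is open, as the relation is translation
by the group `B^n(G, A_r)`, and its graph is closed, as that group is compact. A continuous
bijection from a compact space onto a Hausdorff one is a homeomorphism.
-/

theorem EvenlyContinuousSet.isClosed_setOf_continuous {B A : Type} [TopologicalSpace B]
    [TopologicalSpace A] [RegularSpace A]
    (hec : EvenlyContinuousSet {f : B → A | Continuous f}) :
    IsClosed {f : B → A | Continuous f} := by
  refine closure_subset_iff_isClosed.mp fun g hg => continuous_iff_continuousAt.mpr fun b => ?_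
  refine (closed_nhds_basis (g b)).tendsto_right_iff.mpr fun U ⟨hU, hUc⟩ => ?_
  obtain ⟨V, hV, W, hW, hVU⟩ := hec b (g b) U hU
  obtain ⟨W₀, hW₀W, hW₀, hgW₀⟩ := mem_nhds_iff.mp hW
  filter_upwards [hV] with v hv
  have hclosed : IsClosed {f : B → A | f b ∈ W₀ → f v ∈ U} :=
    isClosed_imp (hW₀.preimage (continuous_apply b)) (hUc.preimage (continuous_apply v))
  exact closure_minimal (fun f hf hfW => hVU f hf (hW₀W hfW) v hv) hclosed hg hgW₀

section Cochains

variable {G A : Type} [Group G] [AddCommGroup A] {ac : G → A → A}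

theorem dmap_add (hadd : ∀ s x y, ac s (x + y) = ac s x + ac s y) (n : ℕ)
    (f g : (Fin n → G) → A) : dmap ac n (f + g) = dmap ac n f + dmap ac n g := by
  funext s
  simp only [dmap, Pi.add_apply, hadd, smul_add, Finset.sum_add_distrib]
  abel

def dmapHom (hadd : ∀ s x y, ac s (x + y) = ac s x + ac s y) (n : ℕ) :
    ((Fin n → G) → A) →+ ((Fin (n + 1) → G) → A) :=
  AddMonoidHom.mk' (dmap ac n) (dmap_add hadd n)

theorem dmap_sub (hadd : ∀ s x y, ac s (x + y) = ac s x + ac s y) (n : ℕ)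
    (f g : (Fin n → G) → A) : dmap ac n (f - g) = dmap ac n f - dmap ac n g :=
  (dmapHom hadd n).map_sub f g

theorem AddMonoidHom.comp_dmap {A' : Type} [AddCommGroup A'] {ac' : G → A' → A'}
    (ψ : A →+ A') (hψ : ∀ s x, ψ (ac s x) = ac' s (ψ x)) (n : ℕ) (f : (Fin n → G) → A) :
    ψ ∘ dmap ac n f = dmap ac' n (ψ ∘ f) := by
  funext s
  simp [dmap, map_zsmul, hψ]

variable [TopologicalSpace A] [IsTopologicalAddGroup A]

theorem continuous_dmap (hac : ∀ s, Continuous (ac s)) (n : ℕ) :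
    Continuous (dmap ac n) :=
  continuous_pi fun s => by unfold dmap; fun_prop

theorem Continuous.dmap [TopologicalSpace G] [ContinuousMul G] {n : ℕ} {f : (Fin n → G) → A}
    (hf : Continuous f) (hac : Continuous fun p : G × A => ac p.1 p.2) :
    Continuous (dmap ac n f) := by
  have hface : ∀ i : Fin n, Continuous fun s : Fin (n + 1) → G => fun j : Fin n =>
      if (j : ℕ) < i then s j.castSucc
      else if (j : ℕ) = i then s j.castSucc * s j.succ else s j.succ :=
    fun i => continuous_pi fun j => by split_ifs <;> fun_prop
  exact ((hac.comp ((continuous_apply 0).prodMk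
    (hf.comp (continuous_pi fun j => continuous_apply j.succ)))).add
    (continuous_finsetSum _ fun i _ =>
      (hf.comp (hface i)).const_smul ((-1 : ℤ) ^ ((i : ℕ) + 1)))).add
    ((hf.comp (continuous_pi fun j => continuous_apply j.castSucc)).const_smul
      ((-1 : ℤ) ^ (n + 1)))

end Cochains

section Coboundaries

variable {G A : Type} [Group G] [TopologicalSpace G] [AddCommGroup A] [TopologicalSpace A]
  [IsTopologicalAddGroup A] {ac : G → A → A} (hadd : ∀ s x y, ac s (x + y) = ac s x + ac s y)

def coboundaries (n : ℕ) : AddSubgroup ((Fin (n + 1) → G) → A) :=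
  (continuousAddSubgroup (Fin n → G) A).map (dmapHom hadd n)

variable {hadd}

theorem mem_coboundaries {n : ℕ} {c : (Fin (n + 1) → G) → A} :
    c ∈ coboundaries hadd n ↔ ∃ f, Continuous f ∧ dmap ac n f = c :=
  AddSubgroup.mem_map

theorem continuous_of_mem_coboundaries [ContinuousMul G]
    (hac : Continuous fun p : G × A => ac p.1 p.2) {n : ℕ} {c : (Fin (n + 1) → G) → A}
    (hc : c ∈ coboundaries hadd n) : Continuous c := by
  obtain ⟨f, hf, rfl⟩ := mem_coboundaries.mp hc
  exact hf.dmap hac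

theorem isCompact_coboundaries [CompactSpace A] [RegularSpace A] (hac : ∀ s, Continuous (ac s))
    {n : ℕ} (hec : EvenlyContinuousSet {f : (Fin n → G) → A | Continuous f}) :
    IsCompact (coboundaries hadd n : Set ((Fin (n + 1) → G) → A)) := by
  rw [coboundaries, AddSubgroup.coe_map]
  exact hec.isClosed_setOf_continuous.isCompact.image (continuous_dmap hac n)

theorem comp_mem_coboundaries {A' : Type} [AddCommGroup A'] [TopologicalSpace A']
    [IsTopologicalAddGroup A'] {ac' : G → A' → A'}
    {hadd' : ∀ s x y, ac' s (x + y) = ac' s x + ac' s y} (ψ : A →+ A') (hψc : Continuous ψ)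
    (hψ : ∀ s x, ψ (ac s x) = ac' s (ψ x)) {n : ℕ} {c : (Fin (n + 1) → G) → A}
    (hc : c ∈ coboundaries hadd n) : ψ ∘ c ∈ coboundaries hadd' n := by
  obtain ⟨f, hf, rfl⟩ := mem_coboundaries.mp hc
  exact mem_coboundaries.mpr ⟨ψ ∘ f, hψc.comp hf, (ψ.comp_dmap hψ n f).symm⟩

end Coboundaries

section QuotBySubgroup

variable {E : Type*} [AddCommGroup E] {P : E → Prop} {B : AddSubgroup E}
  {rel : Subtype P → Subtype P → Prop}

theorem equivalence_of_iff_sub_mem (hrel : ∀ x y, rel x y ↔ (y : E) - x ∈ B) :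
    Equivalence rel where
  refl x := (hrel x x).mpr (by simp)
  symm {x y} h := (hrel y x).mpr (by simpa using B.neg_mem ((hrel x y).mp h))
  trans {x y z} h h' :=
    (hrel x z).mpr (by simpa using B.add_mem ((hrel y z).mp h') ((hrel x y).mp h))

theorem quot_mk_eq_iff_of_iff_sub_mem (hrel : ∀ x y, rel x y ↔ (y : E) - x ∈ B)
    {x y : Subtype P} : Quot.mk rel x = Quot.mk rel y ↔ rel x y :=
  Quot.eq.trans (equivalence_of_iff_sub_mem hrel).eqvGen_iff

variable [TopologicalSpace E] [IsTopologicalAddGroup E]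

theorem isOpenMap_quot_mk_of_iff_sub_mem (hP : ∀ x y, P x → P y → P (x - y))
    (hrel : ∀ x y, rel x y ↔ (y : E) - x ∈ B) : IsOpenMap (Quot.mk rel) := by
  rintro _ ⟨U, hU, rfl⟩
  refine isQuotientMap_quot_mk.isOpen_preimage.mp (isOpen_iff_forall_mem_open.mpr ?_)
  rintro y₀ ⟨x₀, hx₀, hxy⟩
  have hb : (y₀ : E) - x₀ ∈ B := (hrel _ _).mp ((quot_mk_eq_iff_of_iff_sub_mem hrel).mp hxy)
  refine ⟨{y | (y : E) - (y₀ - x₀) ∈ U}, fun y hy => ?_, hU.preimage (by fun_prop),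
    by simpa using hx₀⟩
  refine ⟨⟨y - (y₀ - x₀), hP _ _ y.2 (hP _ _ y₀.2 x₀.2)⟩, hy,
    (quot_mk_eq_iff_of_iff_sub_mem hrel).mpr ((hrel _ _).mpr (by simpa using hb))⟩

theorem t2Space_quot_of_iff_sub_mem [T2Space E] (hP : ∀ x y, P x → P y → P (x - y))
    (hrel : ∀ x y, rel x y ↔ (y : E) - x ∈ B) (hB : IsCompact (B : Set E)) :
    T2Space (Quot rel) := by
  have hquot : IsOpenQuotientMap (Quot.mk rel) :=
    ⟨Quot.mk_surjective, continuous_quot_mk, isOpenMap_quot_mk_of_iff_sub_mem hP hrel⟩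
  rw [t2Space_iff_of_isOpenQuotientMap hquot]
  simp only [quot_mk_eq_iff_of_iff_sub_mem hrel, hrel]
  exact hB.isClosed.preimage (by fun_prop)

end QuotBySubgroup

theorem exists_compatible_of_isClosed {R : Type*} [Preorder R] [IsDirected R (· ≤ ·)]
    {Y : R → Type*} [∀ r, TopologicalSpace (Y r)] [∀ r, CompactSpace (Y r)]
    [∀ r, T2Space (Y r)] (ψ : ∀ ⦃r t : R⦄, t ≤ r → Y r → Y t)
    (hψ : ∀ r t (h : t ≤ r), Continuous (ψ h))
    (hψψ : ∀ (r t u : R) (h₁ : u ≤ t) (h₂ : t ≤ r) y, ψ h₁ (ψ h₂ y) = ψ (h₁.trans h₂) y)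
    (F : ∀ r, Set (Y r)) (hF : ∀ r, IsClosed (F r)) (hFne : ∀ r, (F r).Nonempty)
    (hFψ : ∀ r t (h : t ≤ r), ∀ y ∈ F r, ψ h y ∈ F t) :
    ∃ y : ∀ r, Y r, (∀ r, y r ∈ F r) ∧ ∀ r t (h : t ≤ r), ψ h (y r) = y t := by
  classical
  rcases isEmpty_or_nonempty R with hR | hR
  · exact ⟨isEmptyElim, isEmptyElim, fun r => isEmptyElim r⟩
  -- Cantor's intersection theorem, for the families that are compatible and lie in `F` below `M`.
  let S : R → Set (∀ r, Y r) := fun M =>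
    {y | ∀ r, r ≤ M → y r ∈ F r ∧ ∀ t (h : t ≤ r), ψ h (y r) = y t}
  have hS_closed : ∀ M, IsClosed (S M) := fun M => by
    simp only [S, Set.ofPred_forall, Set.ofPred_and]
    exact isClosed_iInter fun r => isClosed_iInter fun _ =>
      ((hF r).preimage (continuous_apply r)).inter (isClosed_iInter fun t =>
        isClosed_iInter fun h => isClosed_eq ((hψ r t h).comp (continuous_apply r))
          (continuous_apply t))
  have hS_ne : ∀ M, (S M).Nonempty := fun M => by
    obtain ⟨y₀, hy₀⟩ := hFne M
    refine ⟨fun r => if h : r ≤ M then ψ h y₀ else (hFne r).some, fun r hr => ?_⟩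
    refine ⟨by simpa [dif_pos hr] using hFψ _ _ hr _ hy₀, fun t h => ?_⟩
    simp only [dif_pos hr, dif_pos (h.trans hr), hψψ]
  have hS_dir : Directed (· ⊇ ·) S := fun M₁ M₂ => by
    obtain ⟨M, h₁, h₂⟩ := directed_of (· ≤ ·) M₁ M₂
    exact ⟨M, fun y hy r hr => hy r (hr.trans h₁), fun y hy r hr => hy r (hr.trans h₂)⟩
  obtain ⟨y, hy⟩ := IsCompact.nonempty_iInter_of_directed_nonempty_isCompact_isClosed S
    hS_dir hS_ne (fun M => (hS_closed M).isCompact) hS_closed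
  have hyS := Set.mem_iInter.mp hy
  exact ⟨y, fun r => (hyS r r le_rfl).1, fun r t h => (hyS r r le_rfl).2 t h⟩

structure IsContinuousAdditiveAction {G A : Type} [TopologicalSpace G] [AddCommGroup A]
    [TopologicalSpace A] (ac : G → A → A) : Prop where
  continuous : Continuous fun p : G × A => ac p.1 p.2
  map_add : ∀ s x y, ac s (x + y) = ac s x + ac s y

theorem IsContinuousAdditiveAction.continuous_act {G A : Type} [TopologicalSpace G]
    [AddCommGroup A] [TopologicalSpace A] {ac : G → A → A} (hac : IsContinuousAdditiveAction ac)
    (s : G) : Continuous (ac s) :=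
  hac.continuous.comp (Continuous.prodMk_right s)

structure IsEquivariantInverseSystem {G R : Type} [PartialOrder R] {Ar : R → Type}
    [∀ r, AddCommGroup (Ar r)] [∀ r, TopologicalSpace (Ar r)] (acr : ∀ r, G → Ar r → Ar r)
    (φ : ∀ ⦃r t : R⦄, t ≤ r → Ar r → Ar t) : Prop where
  continuous : ∀ r t (h : t ≤ r), Continuous (φ h)
  map_map : ∀ (r t u : R) (h₁ : u ≤ t) (h₂ : t ≤ r) (x : Ar r),
    φ h₁ (φ h₂ x) = φ (h₁.trans h₂) x
  map_add : ∀ (r t : R) (h : t ≤ r) (x y : Ar r), φ h (x + y) = φ h x + φ h y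
  map_act : ∀ (r t : R) (h : t ≤ r) (s : G) (x : Ar r), φ h (acr r s x) = acr t s (φ h x)

namespace IsEquivariantInverseSystem

variable {G R : Type} [PartialOrder R] {Ar : R → Type} [∀ r, AddCommGroup (Ar r)]
  [∀ r, TopologicalSpace (Ar r)] {acr : ∀ r, G → Ar r → Ar r}
  {φ : ∀ ⦃r t : R⦄, t ≤ r → Ar r → Ar t}

def addMonoidHom (hφ : IsEquivariantInverseSystem acr φ) {r t : R} (h : t ≤ r) :
    Ar r →+ Ar t :=
  AddMonoidHom.mk' (φ h) (hφ.map_add r t h)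

theorem comp_sub (hφ : IsEquivariantInverseSystem acr φ) {r t : R}
    (h : t ≤ r) {X : Type} (f g : X → Ar r) : φ h ∘ (f - g) = φ h ∘ f - φ h ∘ g :=
  funext fun _ => (hφ.addMonoidHom h).map_sub _ _

theorem comp_dmap [Group G] (hφ : IsEquivariantInverseSystem acr φ) {r t : R}
    (h : t ≤ r) (n : ℕ) (f : (Fin n → G) → Ar r) :
    φ h ∘ dmap (acr r) n f = dmap (acr t) n (φ h ∘ f) :=
  (hφ.addMonoidHom h).comp_dmap (hφ.map_act r t h) n f

theorem exists_compatible [IsDirected R (· ≤ ·)] [∀ r, CompactSpace (Ar r)]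
    [∀ r, T2Space (Ar r)] (hφ : IsEquivariantInverseSystem acr φ) {X : Type}
    (F : ∀ r, Set (X → Ar r))
    (hF : ∀ r, IsClosed (F r)) (hFne : ∀ r, (F r).Nonempty)
    (hFφ : ∀ r t (h : t ≤ r), ∀ f ∈ F r, φ h ∘ f ∈ F t) :
    ∃ g : ∀ r, X → Ar r, (∀ r, g r ∈ F r) ∧ ∀ r t (h : t ≤ r) x, φ h (g r x) = g t x := by
  obtain ⟨g, hgF, hg⟩ := exists_compatible_of_isClosed (fun _ _ h f => φ h ∘ f)
    (fun r t h => continuous_pi fun x => (hφ.continuous r t h).comp (continuous_apply x))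
    (fun r t u h₁ h₂ f => funext fun x => hφ.map_map r t u h₁ h₂ (f x)) F hF hFne hFφ
  exact ⟨g, hgF, fun r t h x => congrFun (hg r t h) x⟩

end IsEquivariantInverseSystem

section Cohomology

variable {G : Type} [Group G] [TopologicalSpace G] {R : Type} {Ar : R → Type}
  [∀ r, AddCommGroup (Ar r)] [∀ r, TopologicalSpace (Ar r)] [∀ r, IsTopologicalAddGroup (Ar r)]
  {acr : ∀ r, G → Ar r → Ar r} {m : ℕ}

theorem cohr_iff (hA : ∀ r, IsContinuousAdditiveAction (acr r)) {r : R} (b b' : Zr acr m r) :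
    Cohr acr m r b b' ↔ b'.val - b.val ∈ coboundaries (hA r).map_add m := by
  rw [mem_coboundaries]
  refine exists_congr fun f => and_congr_right' ?_
  rw [funext_iff]
  exact forall_congr' fun s => by rw [Pi.sub_apply, eq_sub_iff_add_eq', eq_comm]

theorem quot_mk_cohr_eq_iff (hA : ∀ r, IsContinuousAdditiveAction (acr r)) {r : R}
    {b b' : Zr acr m r} :
    Quot.mk (Cohr acr m r) b = Quot.mk _ b' ↔ b'.val - b.val ∈ coboundaries (hA r).map_add m :=
  (quot_mk_eq_iff_of_iff_sub_mem (cohr_iff hA)).trans (cohr_iff hA b b')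

theorem t2Space_cohomology [∀ r, CompactSpace (Ar r)] [∀ r, T2Space (Ar r)]
    (hA : ∀ r, IsContinuousAdditiveAction (acr r))
    (hec : ∀ r, EvenlyContinuousSet {f : (Fin m → G) → Ar r | Continuous f}) (r : R) :
    T2Space (Quot (Cohr acr m r)) :=
  t2Space_quot_of_iff_sub_mem
    (fun _ _ hx hy => ⟨hx.1.sub hy.1, fun s => by
      rw [dmap_sub (hA r).map_add, Pi.sub_apply, hx.2 s, hy.2 s, sub_zero]⟩)
    (cohr_iff hA) (isCompact_coboundaries (hA r).continuous_act (hec r))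

end Cohomology

section InverseSystem

variable {G : Type} [Group G] [TopologicalSpace G] {R : Type} [PartialOrder R]
  {Ar : R → Type} [∀ r, AddCommGroup (Ar r)] [∀ r, TopologicalSpace (Ar r)]
  {acr : ∀ r, G → Ar r → Ar r} {φ : ∀ ⦃r t : R⦄, t ≤ r → Ar r → Ar t} {m : ℕ}

def IsEquivariantInverseSystem.mapCocycle (hφ : IsEquivariantInverseSystem acr φ) {r t : R}
    (h : t ≤ r) (b : Zr acr m r) : Zr acr m t :=
  ⟨φ h ∘ b.val, (hφ.continuous r t h).comp b.2.1, fun s => by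
    rw [← hφ.comp_dmap, Function.comp_apply, b.2.2 s]
    exact (hφ.addMonoidHom h).map_zero⟩

def cocycleProj (a : ZLim acr φ m) (r : R) : Zr acr m r :=
  ⟨fun s => (a.val s).val r, ((continuous_apply r).comp continuous_subtype_val).comp a.2.1,
    a.2.2 r⟩

theorem continuous_cocycleProj (r : R) : Continuous fun a : ZLim acr φ m => cocycleProj a r :=
  Continuous.subtype_mk (continuous_pi fun s => ((continuous_apply r).comp
    continuous_subtype_val).comp ((continuous_apply s).comp continuous_subtype_val)) _

theorem comp_cocycleProj (a : ZLim acr φ m) {r t : R} (h : t ≤ r) :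
    φ h ∘ (cocycleProj a r).val = (cocycleProj a t).val :=
  funext fun s => (a.val s).2 r t h

theorem IsEquivariantInverseSystem.mapCocycle_cocycleProj (hφ : IsEquivariantInverseSystem acr φ)
    (a : ZLim acr φ m) {r t : R} (h : t ≤ r) :
    hφ.mapCocycle h (cocycleProj a r) = cocycleProj a t :=
  Subtype.ext (comp_cocycleProj a h)

variable [∀ r, IsTopologicalAddGroup (Ar r)]

theorem IsEquivariantInverseSystem.comp_sub_mem_coboundaries
    (hA : ∀ r, IsContinuousAdditiveAction (acr r)) (hφ : IsEquivariantInverseSystem acr φ)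
    {r t : R} (h : t ≤ r) {c c' : (Fin (m + 1) → G) → Ar r}
    (hc : c' - c ∈ coboundaries (hA r).map_add m) :
    φ h ∘ c' - φ h ∘ c ∈ coboundaries (hA t).map_add m := by
  rw [← hφ.comp_sub]
  exact comp_mem_coboundaries (hφ.addMonoidHom h) (hφ.continuous r t h) (hφ.map_act r t h) hc

theorem IsEquivariantInverseSystem.quot_mk_mapCocycle
    (hA : ∀ r, IsContinuousAdditiveAction (acr r)) (hφ : IsEquivariantInverseSystem acr φ)
    {r t : R} (h : t ≤ r) {b b' : Zr acr m r} (hb : Quot.mk (Cohr acr m r) b = Quot.mk _ b') :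
    Quot.mk (Cohr acr m t) (hφ.mapCocycle h b) = Quot.mk _ (hφ.mapCocycle h b') :=
  (quot_mk_cohr_eq_iff hA).mpr (hφ.comp_sub_mem_coboundaries hA h ((quot_mk_cohr_eq_iff hA).mp hb))

/-- `lim_r H^n_cts(G, A_r)_po`. -/
abbrev LimCohomology (acr : ∀ r, G → Ar r → Ar r) (φ : ∀ ⦃r t : R⦄, t ≤ r → Ar r → Ar t)
    (m : ℕ) : Type :=
  {h : ∀ r, Quot (Cohr acr m r) //
    ∀ (r t : R) (hle : t ≤ r) (b : Zr acr m r), h r = Quot.mk _ b →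
      ∃ c : Zr acr m t, (∀ s, c.val s = φ hle (b.val s)) ∧ h t = Quot.mk _ c}

def cocycleToLimCohomology (hA : ∀ r, IsContinuousAdditiveAction (acr r))
    (hφ : IsEquivariantInverseSystem acr φ) (a : ZLim acr φ m) : LimCohomology acr φ m :=
  ⟨fun r => Quot.mk _ (cocycleProj a r), fun _ _ h _ hb => ⟨hφ.mapCocycle h _, fun _ => rfl, by
    dsimp only
    rw [← hφ.mapCocycle_cocycleProj a h]
    exact hφ.quot_mk_mapCocycle hA h hb⟩⟩

/-- The map `Θ_n`. -/
def toLimCohomology (hA : ∀ r, IsContinuousAdditiveAction (acr r))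
    (hφ : IsEquivariantInverseSystem acr φ) : Quot (CohLim acr φ m) → LimCohomology acr φ m :=
  Quot.lift (cocycleToLimCohomology hA hφ) fun _ _ ⟨f, hf, hfab⟩ =>
    Subtype.ext <| funext fun r => Quot.sound ⟨fun u => (f u).val r,
      ((continuous_apply r).comp continuous_subtype_val).comp hf, fun s => hfab s r⟩

theorem continuous_toLimCohomology (hA : ∀ r, IsContinuousAdditiveAction (acr r))
    (hφ : IsEquivariantInverseSystem acr φ) : Continuous (toLimCohomology (m := m) hA hφ) :=
  continuous_quot_lift _ (Continuous.subtype_mk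
    (continuous_pi fun r => continuous_quot_mk.comp (continuous_cocycleProj r)) _)

theorem compactSpace_ZLim [CompactSpace (InvLim φ)] [∀ r, T2Space (Ar r)]
    (hA : ∀ r, IsContinuousAdditiveAction (acr r))
    (hec : EvenlyContinuousSet {f : (Fin (m + 1) → G) → InvLim φ | Continuous f}) :
    CompactSpace (ZLim acr φ m) := by
  suffices IsClosed {a : (Fin (m + 1) → G) → InvLim φ | Continuous a ∧
      ∀ r s, dmap (acr r) (m + 1) (fun u => (a u).val r) s = 0} from
    isCompact_iff_compactSpace.mp this.isCompact
  simp only [Set.ofPred_and, Set.ofPred_forall]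
  exact hec.isClosed_setOf_continuous.inter (isClosed_iInter fun r => isClosed_iInter fun s =>
    isClosed_eq ((continuous_apply s).comp ((continuous_dmap (hA r).continuous_act _).comp
      (continuous_pi fun u => (continuous_apply r).comp
        (continuous_subtype_val.comp (continuous_apply u))))) continuous_const)

variable [IsDirected R (· ≤ ·)] [∀ r, CompactSpace (Ar r)] [∀ r, T2Space (Ar r)]

theorem injective_toLimCohomology (hA : ∀ r, IsContinuousAdditiveAction (acr r))
    (hφ : IsEquivariantInverseSystem acr φ)
    (hec : ∀ r, EvenlyContinuousSet {f : (Fin m → G) → Ar r | Continuous f}) :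
    Function.Injective (toLimCohomology (m := m) hA hφ) := by
  rintro ⟨a⟩ ⟨b⟩ hab
  have hcob : ∀ r, (cocycleProj b r).val - (cocycleProj a r).val ∈
      coboundaries (hA r).map_add m :=
    fun r => (quot_mk_cohr_eq_iff hA).mp (congrFun (congrArg Subtype.val hab) r)
  let F : ∀ r, Set ((Fin m → G) → Ar r) := fun r =>
    {f | Continuous f ∧ dmap (acr r) m f = (cocycleProj b r).val - (cocycleProj a r).val}
  obtain ⟨g, hgF, hg⟩ := hφ.exists_compatible F
    (fun r => (hec r).isClosed_setOf_continuous.inter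
      (isClosed_eq (continuous_dmap (hA r).continuous_act m) continuous_const))
    (fun r => mem_coboundaries.mp (hcob r))
    (fun r t h f ⟨hf, hdf⟩ => ⟨(hφ.continuous r t h).comp hf, by
      rw [← hφ.comp_dmap, hdf, hφ.comp_sub, comp_cocycleProj, comp_cocycleProj]⟩)
  refine Quot.sound ⟨fun u => ⟨fun r => g r u, fun r t h => hg r t h u⟩,
    Continuous.subtype_mk (continuous_pi fun r => (hgF r).1) _, fun s r => ?_⟩
  show _ = _ + dmap (acr r) m (g r) s
  rw [(hgF r).2]
  exact (add_sub_cancel _ _).symm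

theorem surjective_toLimCohomology [ContinuousMul G]
    (hA : ∀ r, IsContinuousAdditiveAction (acr r)) (hφ : IsEquivariantInverseSystem acr φ)
    (hec : ∀ r, EvenlyContinuousSet {f : (Fin m → G) → Ar r | Continuous f}) :
    Function.Surjective (toLimCohomology (m := m) hA hφ) := by
  rintro ⟨h, hh⟩
  choose b hb using fun r => Quot.exists_rep (h r)
  let K : ∀ r, Set ((Fin (m + 1) → G) → Ar r) := fun r =>
    {c | dmap (acr r) (m + 1) c = 0 ∧ c - (b r).val ∈ coboundaries (hA r).map_add m}
  have hK_closed : ∀ r, IsClosed (K r) := fun r =>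
    (isClosed_eq (continuous_dmap (hA r).continuous_act _) continuous_const).inter
      ((isCompact_coboundaries (hA r).continuous_act (hec r)).isClosed.preimage
        (continuous_id.sub continuous_const))
  have hK_ne : ∀ r, (K r).Nonempty := fun r =>
    ⟨(b r).val, funext (b r).2.2, show _ - _ ∈ _ by rw [sub_self]; exact zero_mem _⟩
  have hKφ : ∀ r t (hle : t ≤ r), ∀ c ∈ K r, φ hle ∘ c ∈ K t := by
    rintro r t hle c ⟨hc, hcb⟩
    obtain ⟨c', hc'b, hc't⟩ := hh r t hle (b r) (hb r).symm
    have hc'_sub : c'.val - (b t).val ∈ coboundaries (hA t).map_add m :=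
      (quot_mk_cohr_eq_iff hA).mp ((hb t).trans hc't)
    refine ⟨by rw [← hφ.comp_dmap, hc]; exact funext fun _ => (hφ.addMonoidHom hle).map_zero, ?_⟩
    have := add_mem (hφ.comp_sub_mem_coboundaries hA hle hcb) hc'_sub
    rwa [show c'.val = φ hle ∘ (b r).val from funext hc'b, sub_add_sub_cancel] at this
  obtain ⟨g, hgK, hg⟩ := hφ.exists_compatible K hK_closed hK_ne hKφ
  have hg_cont : ∀ r, Continuous (g r) := fun r => by
    simpa using (continuous_of_mem_coboundaries (hA r).continuous (hgK r).2).add (b r).2.1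
  refine ⟨Quot.mk _ ⟨fun s => ⟨fun r => g r s, fun r t h => hg r t h s⟩,
    Continuous.subtype_mk (continuous_pi hg_cont) _, fun r => congrFun (hgK r).1⟩,
    Subtype.ext (funext fun r => ((quot_mk_cohr_eq_iff hA).mpr ?_).trans (hb r))⟩
  rw [← neg_sub]
  exact neg_mem (hgK r).2

end InverseSystem

theorem stmt_18_general
    {G : Type} [Group G] [TopologicalSpace G] [IsTopologicalGroup G]
    {R : Type} [PartialOrder R] [IsDirected R (· ≤ ·)]
    (Ar : R → Type) [∀ r, AddCommGroup (Ar r)] [∀ r, TopologicalSpace (Ar r)]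
    [∀ r, IsTopologicalAddGroup (Ar r)] [∀ r, T2Space (Ar r)] [∀ r, CompactSpace (Ar r)]
    (acr : ∀ r, G → Ar r → Ar r)
    (hacr : ∀ r, Continuous fun p : G × Ar r => acr r p.1 p.2)
    (hdistr : ∀ r (s : G) (x y : Ar r), acr r s (x + y) = acr r s x + acr r s y)
    (φ : ∀ ⦃r t : R⦄, t ≤ r → Ar r → Ar t)
    (hφcont : ∀ (r t : R) (h : t ≤ r), Continuous (φ h))
    (hφcomp : ∀ (r t u : R) (h1 : u ≤ t) (h2 : t ≤ r) (x : Ar r),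
      φ h1 (φ h2 x) = φ (h1.trans h2) x)
    (hφadd : ∀ (r t : R) (h : t ≤ r) (x y : Ar r), φ h (x + y) = φ h x + φ h y)
    (hφequiv : ∀ (r t : R) (h : t ≤ r) (s : G) (x : Ar r),
      φ h (acr r s x) = acr t s (φ h x))
    -- `A` is a compact `G`-module
    (hAcomp : CompactSpace (InvLim φ))
    (m : ℕ)
    -- each `A_r` is evenly continuous with respect to `G^{n-1}`
    (hec : ∀ r, EvenlyContinuousSet {f : (Fin m → G) → Ar r | Continuous f}) :
    ∃ Θ : Quot (CohLim acr φ m) →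
        {h : ∀ r, Quot (Cohr acr m r) //
          ∀ (r t : R) (hle : t ≤ r) (b : Zr acr m r), h r = Quot.mk _ b →
            ∃ c : Zr acr m t, (∀ s, c.val s = φ hle (b.val s)) ∧
              h t = Quot.mk _ c},
      -- `Θ_n` is given by `[a] ↦ ([φ_r ∘ a])_r` (well-definedness included)
      (∀ (a : ZLim acr φ m) (r : R), ∃ c : Zr acr m r,
        (∀ s, c.val s = (a.val s).val r) ∧
        (Θ (Quot.mk _ a)).val r = Quot.mk _ c) ∧
      -- `Θ_n` is a continuous bijection
      Continuous Θ ∧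
      Function.Bijective Θ ∧
      -- homeomorphism if `A` is evenly continuous with respect to `G^n`
      (EvenlyContinuousSet {f : (Fin (m + 1) → G) → InvLim φ | Continuous f} →
        IsHomeomorph Θ) := by
  have hA : ∀ r, IsContinuousAdditiveAction (acr r) := fun r => ⟨hacr r, hdistr r⟩
  have hφ : IsEquivariantInverseSystem acr φ := ⟨hφcont, hφcomp, hφadd, hφequiv⟩
  have hbij : Function.Bijective (toLimCohomology hA hφ) :=
    ⟨injective_toLimCohomology hA hφ hec, surjective_toLimCohomology hA hφ hec⟩
  refine ⟨toLimCohomology hA hφ, fun a r => ⟨cocycleProj a r, fun _ => rfl, rfl⟩,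
    continuous_toLimCohomology hA hφ, hbij, fun hecA => ?_⟩
  have := compactSpace_ZLim hA hecA
  have := t2Space_cohomology hA hec
  exact isHomeomorph_iff_continuous_bijective.mpr ⟨continuous_toLimCohomology hA hφ, hbij⟩

/-- Let `G` be a compact Hausdorff group, `A` a compact `G`-module
with a presentation `A = lim_r A_r` as inverse limit of compact `G`-modules, each
evenly continuous with respect to `G^{n-1}` (here `n = m+1 ≥ 1`), with continuous
`G`-equivariant transition homomorphisms.  Then
`Θ_n : H^n_cts(G,A)_po → lim_r H^n_cts(G,A_r)_po`, `[a] ↦ ([φ_r ∘ a])_r`, is a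
well-defined continuous bijection; if moreover `A` is evenly continuous with respect
to `G^n`, then `Θ_n` is a homeomorphism. -/
theorem stmt_18
    {G : Type} [Group G] [TopologicalSpace G] [IsTopologicalGroup G]
    [CompactSpace G] [T2Space G]
    {R : Type} [PartialOrder R] [IsDirected R (· ≤ ·)]
    (Ar : R → Type) [∀ r, AddCommGroup (Ar r)] [∀ r, TopologicalSpace (Ar r)]
    [∀ r, IsTopologicalAddGroup (Ar r)] [∀ r, T2Space (Ar r)] [∀ r, CompactSpace (Ar r)]
    (acr : ∀ r, G → Ar r → Ar r)
    (hacr : ∀ r, Continuous fun p : G × Ar r => acr r p.1 p.2)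
    (honer : ∀ r (x : Ar r), acr r 1 x = x)
    (hcompr : ∀ r (s t : G) (x : Ar r), acr r (s * t) x = acr r s (acr r t x))
    (hdistr : ∀ r (s : G) (x y : Ar r), acr r s (x + y) = acr r s x + acr r s y)
    (φ : ∀ ⦃r t : R⦄, t ≤ r → Ar r → Ar t)
    (hφcont : ∀ (r t : R) (h : t ≤ r), Continuous (φ h))
    (hφid : ∀ r : R, φ (le_refl r) = id)
    (hφcomp : ∀ (r t u : R) (h1 : u ≤ t) (h2 : t ≤ r) (x : Ar r),
      φ h1 (φ h2 x) = φ (h1.trans h2) x)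
    (hφadd : ∀ (r t : R) (h : t ≤ r) (x y : Ar r), φ h (x + y) = φ h x + φ h y)
    (hφequiv : ∀ (r t : R) (h : t ≤ r) (s : G) (x : Ar r),
      φ h (acr r s x) = acr t s (φ h x))
    -- `A` is a compact `G`-module
    (hAcomp : CompactSpace (InvLim φ))
    (m : ℕ)
    -- each `A_r` is evenly continuous with respect to `G^{n-1}`
    (hec : ∀ r, EvenlyContinuousSet {f : (Fin m → G) → Ar r | Continuous f}) :
    ∃ Θ : Quot (CohLim acr φ m) →
        {h : ∀ r, Quot (Cohr acr m r) //
          ∀ (r t : R) (hle : t ≤ r) (b : Zr acr m r), h r = Quot.mk _ b →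
            ∃ c : Zr acr m t, (∀ s, c.val s = φ hle (b.val s)) ∧
              h t = Quot.mk _ c},
      -- `Θ_n` is given by `[a] ↦ ([φ_r ∘ a])_r` (well-definedness included)
      (∀ (a : ZLim acr φ m) (r : R), ∃ c : Zr acr m r,
        (∀ s, c.val s = (a.val s).val r) ∧
        (Θ (Quot.mk _ a)).val r = Quot.mk _ c) ∧
      -- `Θ_n` is a continuous bijection
      Continuous Θ ∧
      Function.Bijective Θ ∧
      -- homeomorphism if `A` is evenly continuous with respect to `G^n`
      (EvenlyContinuousSet {f : (Fin (m + 1) → G) → InvLim φ | Continuous f} →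
        IsHomeomorph Θ) :=
  stmt_18_general Ar acr hacr hdistr φ hφcont hφcomp hφadd hφequiv hAcomp m hec
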